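/- For every n ≥ 2 such that n is not a power of 2, the order superpower graph S(Q_{4n}) of the generalized quaternion group Q_{4n} of order 4n is not minimally edge connected. -/

import Mathlib

/-- The degree of a vertex: the number of its neighbours. -/
noncomputable def gDeg {V : Type*} (G : SimpleGraph V) (v : V) : ℕ :=
  (G.neighborSet v).ncard

/-- The minimum degree of a graph. -/
noncomputable def minDeg {V : Type*} (G : SimpleGraph V) : ℕ :=
  sInf (Set.range (gDeg G))

/-- The edge connectivity: the minimum size of a set of edges whose removal
disconnects the graph. -/
noncomputable def edgeConn {V : Type*} (G : SimpleGraph V) : ℕ :=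
  sInf {n : ℕ | ∃ S : Set (Sym2 V), S ⊆ G.edgeSet ∧ S.ncard = n ∧
    ¬ (G.deleteEdges S).Connected}

/-- The vertex connectivity: the minimum size of a set of vertices whose removal
disconnects the graph or leaves a single vertex. -/
noncomputable def vertexConn {V : Type*} (G : SimpleGraph V) : ℕ :=
  sInf {n : ℕ | ∃ S : Set V, S.ncard = n ∧ Sᶜ.Nonempty ∧
    (¬ (G.induce Sᶜ).Preconnected ∨ Sᶜ.ncard = 1)}

/-- A graph is minimally edge connected if deleting any edge decreases the
edge connectivity by one. -/
def MinEdgeConnected {V : Type*} (G : SimpleGraph V) : Prop :=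
  ∀ e ∈ G.edgeSet, edgeConn (G.deleteEdges {e}) = edgeConn G - 1

/-- A graph is minimally connected if deleting any edge decreases the
vertex connectivity by one. -/
def MinConnected {V : Type*} (G : SimpleGraph V) : Prop :=
  ∀ e ∈ G.edgeSet, vertexConn (G.deleteEdges {e}) = vertexConn G - 1

/-- The power graph of a group: distinct `x, y` are adjacent iff one is a
natural power of the other. -/
def powerGraph (G : Type*) [Group G] : SimpleGraph G :=
  SimpleGraph.fromRel (fun x y => ∃ m : ℕ, y = x ^ m)

/-- The enhanced power graph of a group: distinct `x, y` are adjacent iff they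
lie in a common cyclic subgroup. -/
def enhancedPowerGraph (G : Type*) [Group G] : SimpleGraph G :=
  SimpleGraph.fromRel
    (fun x y => ∃ z : G, x ∈ Subgroup.zpowers z ∧ y ∈ Subgroup.zpowers z)

/-- The order superpower graph of a group: distinct `x, y` are adjacent iff the
order of one divides the order of the other. -/
def superpowerGraph (G : Type*) [Group G] : SimpleGraph G :=
  SimpleGraph.fromRel (fun x y => orderOf x ∣ orderOf y)

/-! In a finite graph with a universal vertex `u`, the edge connectivity equals the minimum
degree: a vertex `x` cut off from `u` forces, for every neighbour `y` of `x`, the deletion of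
`xy` or of `uy`. The identity is universal in the order superpower graph of `Q_{4n}`. An element
of odd prime order `p ∣ n` has all its neighbours among the `2n` rotations, so the minimum
degree is `< 2n`, while the `2n` elements `xa i` of order `4` have degree `≥ 2n`. Deleting the
edge between `xa 0` and `xa 1` therefore keeps the minimum degree, hence the (positive) edge
connectivity, unchanged. -/

namespace SimpleGraph

variable {V : Type*} {G : SimpleGraph V}

lemma minDeg_le_gDeg (G : SimpleGraph V) (v : V) : minDeg G ≤ gDeg G v :=
  Nat.sInf_le ⟨v, rfl⟩

lemma exists_gDeg_eq_minDeg [Nonempty V] (G : SimpleGraph V) : ∃ v, gDeg G v = minDeg G :=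
  Nat.sInf_mem (Set.range_nonempty _)

lemma le_minDeg [Nonempty V] {k : ℕ} (h : ∀ v, k ≤ gDeg G v) : k ≤ minDeg G :=
  le_csInf (Set.range_nonempty _) (Set.forall_mem_range.2 h)

lemma gDeg_eq_ncard_incidenceSet (G : SimpleGraph V) (v : V) :
    gDeg G v = (G.incidenceSet v).ncard := by
  classical exact (Set.ncard_congr' (G.incidenceSetEquivNeighborSet v)).symm

lemma incidenceSet_deleteEdges (s : Set (Sym2 V)) (v : V) :
    (G.deleteEdges s).incidenceSet v = G.incidenceSet v \ s := by
  ext e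
  simp only [incidenceSet, edgeSet_deleteEdges, Set.mem_ofPred_eq, Set.mem_sdiff]
  tauto

lemma not_connected_deleteIncidenceSet [Nontrivial V] (v : V) :
    ¬ (G.deleteIncidenceSet v).Connected := fun h =>
  h.preconnected.not_isIsolated v fun _ hw => (deleteIncidenceSet_adj.1 hw).2.1 rfl

lemma edgeConn_le_gDeg [Nontrivial V] (G : SimpleGraph V) (v : V) : edgeConn G ≤ gDeg G v :=
  Nat.sInf_le ⟨_, G.incidenceSet_subset v, (G.gDeg_eq_ncard_incidenceSet v).symm,
    not_connected_deleteIncidenceSet v⟩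

lemma gDeg_le_ncard_of_not_reachable [Finite V] {u x : V} (hu : ∀ v ≠ u, G.Adj u v)
    {S : Set (Sym2 V)} (hx : ¬ (G.deleteEdges S).Reachable u x) : gDeg G x ≤ S.ncard := by
  classical
  set H := G.deleteEdges S
  have hxu : x ≠ u := by rintro rfl; exact hx .rfl
  -- Charge a neighbour `y` of `x` to the edge `xy` if `y` is still reachable from `u`,
  -- and to the edge `uy` otherwise: in both cases that edge has been deleted.
  refine Set.ncard_le_ncard_of_injOn (fun y => if H.Reachable u y then s(x, y) else s(u, y))
    (fun y (hy : G.Adj x y) => ?_) (fun y₁ (hy₁ : G.Adj x y₁) y₂ (hy₂ : G.Adj x y₂) h => ?_)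
  · by_cases hr : H.Reachable u y
    · simp only [hr, if_true]
      by_contra hS
      exact hx (hr.trans (deleteEdges_adj.2 ⟨hy.symm, by rwa [Sym2.eq_swap]⟩).reachable)
    · simp only [hr, if_false]
      have hyu : y ≠ u := by rintro rfl; exact hr .rfl
      by_contra hS
      exact hr (deleteEdges_adj.2 ⟨hu y hyu, hS⟩).reachable
  · have := hy₁.ne; have := hy₂.ne
    by_cases hr₁ : H.Reachable u y₁ <;> by_cases hr₂ : H.Reachable u y₂ <;>
      simp only [hr₁, hr₂, if_true, if_false, Sym2.eq_iff] at h <;> grind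

lemma connected_deleteEdges_of_ncard_lt_minDeg [Finite V] {u : V} (hu : ∀ v ≠ u, G.Adj u v)
    {S : Set (Sym2 V)} (hS : S.ncard < minDeg G) : (G.deleteEdges S).Connected := by
  refine (connected_iff_exists_forall_reachable _).2 ⟨u, fun x => ?_⟩
  by_contra hx
  exact (gDeg_le_ncard_of_not_reachable hu hx).not_gt (hS.trans_le (G.minDeg_le_gDeg x))

theorem edgeConn_eq_minDeg_of_forall_adj [Finite V] [Nontrivial V] {u : V}
    (hu : ∀ v ≠ u, G.Adj u v) : edgeConn G = minDeg G := by
  obtain ⟨v, hv⟩ := G.exists_gDeg_eq_minDeg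
  refine le_antisymm (hv ▸ G.edgeConn_le_gDeg v) (le_csInf ⟨_, _, G.incidenceSet_subset v, rfl,
    not_connected_deleteIncidenceSet v⟩ ?_)
  rintro _ ⟨S, -, rfl, hS⟩
  by_contra! hlt
  exact hS (connected_deleteEdges_of_ncard_lt_minDeg hu hlt)

lemma minDeg_pos_of_forall_adj [Finite V] [Nontrivial V] {u : V} (hu : ∀ v ≠ u, G.Adj u v) :
    0 < minDeg G := by
  refine le_minDeg fun v => (Set.ncard_pos (Set.toFinite _)).2 ?_
  by_cases hv : v = u
  · obtain ⟨w, hw⟩ := exists_ne u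
    exact ⟨w, hv ▸ hu w hw⟩
  · exact ⟨u, (hu v hv).symm⟩

lemma minDeg_le_minDeg_deleteEdges_singleton [Nonempty V] {e : Sym2 V}
    (he : ∀ v ∈ e, minDeg G < gDeg G v) : minDeg G ≤ minDeg (G.deleteEdges {e}) := by
  refine le_minDeg fun v => ?_
  rw [gDeg_eq_ncard_incidenceSet, incidenceSet_deleteEdges]
  by_cases hv : v ∈ e
  · have hlt := he v hv
    have := Set.pred_ncard_le_ncard_sdiff_singleton (G.incidenceSet v) e
    rw [gDeg_eq_ncard_incidenceSet] at hlt
    omega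
  · rw [Set.sdiff_singleton_eq_self fun h => hv h.2, ← gDeg_eq_ncard_incidenceSet]
    exact G.minDeg_le_gDeg v

end SimpleGraph

section superpowerGraph

variable {G : Type*} [Group G]

lemma superpowerGraph_adj {x y : G} : (superpowerGraph G).Adj x y ↔
    x ≠ y ∧ (orderOf x ∣ orderOf y ∨ orderOf y ∣ orderOf x) := by
  simp [superpowerGraph]

lemma superpowerGraph_adj_one {x : G} (hx : x ≠ 1) : (superpowerGraph G).Adj 1 x :=
  superpowerGraph_adj.2 ⟨hx.symm, .inl (by simp)⟩

end superpowerGraph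

namespace QuaternionGroup

lemma xa_ne_one {n : ℕ} (i : ZMod (2 * n)) : xa i ≠ 1 := by
  rw [one_def]
  exact nofun

variable {n : ℕ} [NeZero n]

lemma two_mul_le_gDeg_superpowerGraph_xa (i : ZMod (2 * n)) :
    2 * n ≤ gDeg (superpowerGraph (QuaternionGroup n)) (xa i) := by
  have hsub : insert 1 (Set.range xa \ {xa i}) ⊆
      (superpowerGraph (QuaternionGroup n)).neighborSet (xa i) := by
    rintro w (rfl | ⟨⟨j, rfl⟩, hj⟩)
    · exact (superpowerGraph_adj_one (xa_ne_one i)).symm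
    · exact superpowerGraph_adj.2 ⟨Ne.symm hj, .inl (by simp [orderOf_xa])⟩
  calc 2 * n = (insert 1 (Set.range (xa (n := n)) \ {xa i})).ncard := by
        rw [Set.ncard_insert_of_notMem (by rintro ⟨⟨j, hj⟩, -⟩; exact xa_ne_one j hj),
          Set.ncard_sdiff_singleton_of_mem (Set.mem_range_self i),
          Set.ncard_range_of_injective fun _ _ h => xa.inj h, Nat.card_zmod]
        have := NeZero.pos n
        omega
    _ ≤ _ := Set.ncard_le_ncard hsub

lemma gDeg_superpowerGraph_lt {g : QuaternionGroup n} (hg : ¬ orderOf g ∣ 4)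
    (hg' : ¬ 4 ∣ orderOf g) : gDeg (superpowerGraph (QuaternionGroup n)) g < 2 * n := by
  have hga : g ∈ Set.range a := by
    cases g with
    | a k => exact Set.mem_range_self k
    | xa k => exact absurd (orderOf_xa k).dvd hg
  have hsub : (superpowerGraph (QuaternionGroup n)).neighborSet g ⊂ Set.range a := by
    refine (Set.ssubset_iff_of_subset fun w hw => ?_).2 ⟨g, hga, (superpowerGraph _).irrefl⟩
    cases w with
    | a k => exact Set.mem_range_self k
    | xa k =>
      rw [SimpleGraph.mem_neighborSet, superpowerGraph_adj, orderOf_xa] at hw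
      exact (hw.2.elim hg hg').elim
  calc gDeg _ g < (Set.range (a (n := n))).ncard := Set.ncard_lt_ncard hsub
    _ = 2 * n := by rw [Set.ncard_range_of_injective fun _ _ h => a.inj h, Nat.card_zmod]

end QuaternionGroup

open SimpleGraph QuaternionGroup in
/-- For `n ≥ 2` not a power of `2`, the order superpower graph of
the generalized quaternion group of order `4n` is not minimally edge connected. -/
theorem stmt_13 (n : ℕ) (hn : 2 ≤ n) (hpow : ¬ ∃ k : ℕ, n = 2 ^ k) :
    ¬ MinEdgeConnected (superpowerGraph (QuaternionGroup n)) := by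
  have : NeZero n := ⟨by omega⟩
  have : Fact (1 < 2 * n) := ⟨by omega⟩
  obtain ⟨p, hp, hpn, hodd⟩ := (Nat.eq_two_pow_or_exists_odd_prime_and_dvd n).resolve_left hpow
  have := Fact.mk hp
  obtain ⟨g, hg⟩ := exists_prime_orderOf_dvd_card p (card (n := n) ▸ dvd_mul_of_dvd_right hpn 4)
  have hp4 : ¬ p ∣ 4 := fun h => by
    have := Nat.le_of_dvd (by norm_num) h
    obtain rfl : p = 3 := by grind [hp.two_le]
    norm_num at h
  have h4p : ¬ 4 ∣ p := by grind
  set G := superpowerGraph (QuaternionGroup n)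
  have hδ : minDeg G < 2 * n :=
    (G.minDeg_le_gDeg g).trans_lt (gDeg_superpowerGraph_lt (hg ▸ hp4) (hg ▸ h4p))
  set e : Sym2 (QuaternionGroup n) := s(xa 0, xa 1)
  have he : ∀ v ∈ e, minDeg G < gDeg G v := by
    intro v hv
    rcases Sym2.mem_iff.1 hv with rfl | rfl <;>
      exact hδ.trans_le (two_mul_le_gDeg_superpowerGraph_xa _)
  have hHu : ∀ v ≠ 1, (G.deleteEdges {e}).Adj 1 v := fun v hv =>
    deleteEdges_adj.2 ⟨superpowerGraph_adj_one hv, by simp [e, (xa_ne_one _).symm]⟩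
  intro hmin
  have hdel := hmin e (superpowerGraph_adj.2 ⟨by simp, .inl (by simp [orderOf_xa])⟩)
  rw [edgeConn_eq_minDeg_of_forall_adj hHu,
    edgeConn_eq_minDeg_of_forall_adj (G := G) fun _ => superpowerGraph_adj_one] at hdel
  have := minDeg_le_minDeg_deleteEdges_singleton he
  have := minDeg_pos_of_forall_adj (G := G) fun _ => superpowerGraph_adj_one
  omega
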